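/- For every N ∈ ℕ and p ∈ [1,∞), the Gromov–Hausdorff distance between the closed unit ball of ℝ^N with the ℓ^p-metric and the closed unit ball of ℝ^N with the ℓ^1-metric is at most 2^p − 2. -/

import Mathlib

/-!
The map `x ↦ (sign xᵢ |xᵢ| ^ p)ᵢ` (the Mazur map) is a bijection from the `ℓᵖ` unit ball onto the
`ℓ¹` unit ball. For reals `a, b`, with `φ t = sign t |t| ^ p`, one has
`|a - b| ^ p ≤ 2 ^ (p - 1) |φ a - φ b|` and
`|φ a - φ b| ≤ |a - b| ^ p + (2 ^ (p - 1) - 1) (|a| ^ p + |b| ^ p)`. Summing over coordinates,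
`d = ‖x - y‖_p ≤ 2` and `D = ‖φ x - φ y‖₁` satisfy `d ^ p ≤ 2 ^ (p - 1) D` and
`D ≤ d ^ p + 2 (2 ^ (p - 1) - 1)`, whence `|d - D| ≤ 2 (2 ^ p - 2)` by Bernoulli's inequality.
A surjection with distortion `ε` bounds the Gromov–Hausdorff distance by `ε / 2`.
-/

open Real

noncomputable def signedPow (p t : ℝ) : ℝ := Real.sign t * |t| ^ p

namespace Real

variable {p x y : ℝ}

lemma rpow_add_le_mul_rpow_add_rpow (hp : 1 ≤ p) (hx : 0 ≤ x) (hy : 0 ≤ y) :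
    (x + y) ^ p ≤ 2 ^ (p - 1) * (x ^ p + y ^ p) := by
  lift x to NNReal using hx
  lift y to NNReal using hy
  exact_mod_cast NNReal.rpow_add_le_mul_rpow_add_rpow x y hp

lemma abs_sub_rpow_le_abs_rpow_sub (hp : 1 ≤ p) (hx : 0 ≤ x) (hy : 0 ≤ y) :
    |x - y| ^ p ≤ |x ^ p - y ^ p| := by
  wlog hyx : y ≤ x generalizing x y
  · rw [abs_sub_comm, abs_sub_comm (x ^ p)]
    exact this hy hx (le_of_not_ge hyx)
  have := add_rpow_le_rpow_add (sub_nonneg.2 hyx) hy hp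
  rw [sub_add_cancel] at this
  have hc := rpow_nonneg (sub_nonneg.2 hyx) p
  rw [abs_of_nonneg (sub_nonneg.2 hyx), abs_of_nonneg (by linarith)]
  linarith

lemma abs_rpow_sub_le (hp : 1 ≤ p) (hx : 0 ≤ x) (hy : 0 ≤ y) :
    |x ^ p - y ^ p| ≤ |x - y| ^ p + (2 ^ (p - 1) - 1) * (x ^ p + y ^ p) := by
  wlog hyx : y ≤ x generalizing x y
  · rw [abs_sub_comm, abs_sub_comm x, add_comm (x ^ p)]
    exact this hy hx (le_of_not_ge hyx)
  have hK : 1 ≤ (2 : ℝ) ^ (p - 1) := one_le_rpow one_le_two (by linarith)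
  have hmono : y ^ p ≤ x ^ p := rpow_le_rpow hy hyx (by linarith)
  rw [abs_of_nonneg (sub_nonneg.2 hyx), abs_of_nonneg (sub_nonneg.2 hmono)]
  -- With `K = 2 ^ (p - 1)` this reads `(2 - K) x ^ p ≤ (x - y) ^ p + K y ^ p`; split `x ^ p`
  -- by `hsplit` and use `(2 - K) K = 1 - (K - 1) ^ 2`.
  have hsplit := rpow_add_le_mul_rpow_add_rpow hp (sub_nonneg.2 hyx) hy
  rw [sub_add_cancel] at hsplit
  have hc := rpow_nonneg (sub_nonneg.2 hyx) p
  have hu := rpow_nonneg hy p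
  rcases le_total 2 ((2 : ℝ) ^ (p - 1)) with h2 | h2
  · nlinarith
  · nlinarith [mul_le_mul_of_nonneg_left hsplit (sub_nonneg.2 h2),
      mul_nonneg (sq_nonneg ((2 : ℝ) ^ (p - 1) - 1)) hc,
      mul_nonneg (mul_nonneg (sub_nonneg.2 hK) (by linarith : (0:ℝ) ≤ 2 ^ (p - 1))) hu]

end Real

section SignedPow

variable {p q t : ℝ}

lemma signedPow_neg (p t : ℝ) : signedPow p (-t) = -signedPow p t := by
  simp [signedPow, Real.sign_neg]

lemma signedPow_of_nonneg (hp : p ≠ 0) (ht : 0 ≤ t) : signedPow p t = t ^ p := by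
  rcases ht.eq_or_lt with rfl | ht
  · simp [signedPow, zero_rpow hp]
  · simp [signedPow, Real.sign_of_pos ht, abs_of_pos ht]

lemma signedPow_of_nonpos (hp : p ≠ 0) (ht : t ≤ 0) : signedPow p t = -(-t) ^ p := by
  rw [← signedPow_of_nonneg hp (neg_nonneg.2 ht), signedPow_neg, neg_neg]

lemma abs_signedPow (hp : p ≠ 0) (t : ℝ) : |signedPow p t| = |t| ^ p := by
  rcases le_total 0 t with ht | ht
  · rw [signedPow_of_nonneg hp ht, abs_of_nonneg ht, abs_of_nonneg (rpow_nonneg ht p)]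
  · rw [signedPow_of_nonpos hp ht, abs_neg, abs_of_nonpos ht,
      abs_of_nonneg (rpow_nonneg (neg_nonneg.2 ht) p)]

lemma signedPow_signedPow (hpq : p * q = 1) (t : ℝ) : signedPow q (signedPow p t) = t := by
  have hp : p ≠ 0 := left_ne_zero_of_mul_eq_one hpq
  have hq : q ≠ 0 := right_ne_zero_of_mul_eq_one hpq
  rcases le_total 0 t with ht | ht
  · rw [signedPow_of_nonneg hp ht, signedPow_of_nonneg hq (rpow_nonneg ht p),
      ← rpow_mul ht, hpq, rpow_one]
  · have hpow := rpow_nonneg (neg_nonneg.2 ht) p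
    rw [signedPow_of_nonpos hp ht, signedPow_of_nonpos hq (neg_nonpos.2 hpow), neg_neg,
      ← rpow_mul (neg_nonneg.2 ht), hpq, rpow_one, neg_neg]

lemma abs_signedPow_sub_cases (hp : p ≠ 0) (a b : ℝ) :
    (|a - b| = |(|a| - |b|)| ∧ |signedPow p a - signedPow p b| = |(|a| ^ p - |b| ^ p)|) ∨
      (|a - b| = |a| + |b| ∧ |signedPow p a - signedPow p b| = |a| ^ p + |b| ^ p) := by
  have hpow {t : ℝ} (ht : t ≤ 0) : 0 ≤ (-t) ^ p := rpow_nonneg (neg_nonneg.2 ht) p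
  rcases le_total 0 a with ha | ha <;> rcases le_total 0 b with hb | hb
  · left
    rw [signedPow_of_nonneg hp ha, signedPow_of_nonneg hp hb, abs_of_nonneg ha,
      abs_of_nonneg hb]
    exact ⟨rfl, rfl⟩
  · right
    rw [signedPow_of_nonneg hp ha, signedPow_of_nonpos hp hb, abs_of_nonneg ha,
      abs_of_nonpos hb, abs_of_nonneg (by linarith),
      abs_of_nonneg (by linarith [rpow_nonneg ha p, hpow hb])]
    constructor <;> ring
  · right
    rw [signedPow_of_nonpos hp ha, signedPow_of_nonneg hp hb, abs_of_nonpos ha,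
      abs_of_nonneg hb, abs_of_nonpos (by linarith),
      abs_of_nonpos (by linarith [rpow_nonneg hb p, hpow ha])]
    constructor <;> ring
  · left
    rw [signedPow_of_nonpos hp ha, signedPow_of_nonpos hp hb, abs_of_nonpos ha,
      abs_of_nonpos hb, neg_sub_neg, neg_sub_neg]
    exact ⟨abs_sub_comm _ _, abs_sub_comm _ _⟩

lemma abs_sub_rpow_le_mul_abs_signedPow_sub (hp : 1 ≤ p) (a b : ℝ) :
    |a - b| ^ p ≤ 2 ^ (p - 1) * |signedPow p a - signedPow p b| := by
  rcases abs_signedPow_sub_cases (by positivity) a b with ⟨hd, hD⟩ | ⟨hd, hD⟩ <;> rw [hd, hD]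
  · exact (abs_sub_rpow_le_abs_rpow_sub hp (abs_nonneg a) (abs_nonneg b)).trans
      (le_mul_of_one_le_left (abs_nonneg _) (one_le_rpow one_le_two (by linarith)))
  · exact rpow_add_le_mul_rpow_add_rpow hp (abs_nonneg a) (abs_nonneg b)

lemma abs_signedPow_sub_le (hp : 1 ≤ p) (a b : ℝ) :
    |signedPow p a - signedPow p b| ≤ |a - b| ^ p + (2 ^ (p - 1) - 1) * (|a| ^ p + |b| ^ p) := by
  rcases abs_signedPow_sub_cases (by positivity) a b with ⟨hd, hD⟩ | ⟨hd, hD⟩ <;> rw [hd, hD]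
  · exact abs_rpow_sub_le hp (abs_nonneg a) (abs_nonneg b)
  · have hK : 0 ≤ (2 : ℝ) ^ (p - 1) - 1 := sub_nonneg.2 (one_le_rpow one_le_two (by linarith))
    have := add_rpow_le_rpow_add (abs_nonneg a) (abs_nonneg b) hp
    have := mul_nonneg hK (add_nonneg (rpow_nonneg (abs_nonneg a) p) (rpow_nonneg (abs_nonneg b) p))
    linarith

end SignedPow

lemma abs_sub_le_of_rpow_le_mul_of_le_rpow_add {p d D : ℝ} (hp : 1 ≤ p) (hd : 0 ≤ d)
    (hd2 : d ≤ 2) (hlow : d ^ p ≤ 2 ^ (p - 1) * D) (hup : D ≤ d ^ p + 2 * (2 ^ (p - 1) - 1)) :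
    |d - D| ≤ 2 * (2 ^ p - 2) := by
  obtain ⟨t, rfl⟩ : ∃ t, d = 2 * t := ⟨d / 2, by ring⟩
  have ht0 : 0 ≤ t := by linarith
  have ht1 : t ≤ 1 := by linarith
  have hK : 1 ≤ (2 : ℝ) ^ (p - 1) := one_le_rpow one_le_two (by linarith)
  have hdt : (2 * t) ^ p = 2 * 2 ^ (p - 1) * t ^ p := by
    rw [mul_rpow zero_le_two ht0, rpow_sub_one two_ne_zero]; ring
  have hconvex : t ^ p ≤ t := by
    simpa using rpow_le_rpow_of_exponent_ge' ht0 ht1 zero_le_one hp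
  have hbernoulli : 1 + p * (t - 1) ≤ t ^ p := by
    simpa using one_add_mul_self_le_rpow_one_add (by linarith : -1 ≤ t - 1) hp
  have htwo : 1 + p ≤ 2 ^ p := by
    simpa [one_add_one_eq_two] using one_add_mul_self_le_rpow_one_add (s := 1) (by norm_num) hp
  have h2K : (2 : ℝ) ^ p = 2 * 2 ^ (p - 1) := by
    rw [rpow_sub_one two_ne_zero]; ring
  have hD : 2 * t ^ p ≤ D := by
    rw [hdt, mul_comm 2, mul_assoc] at hlow
    exact le_of_mul_le_mul_left hlow (by linarith)
  rw [abs_sub_le_iff]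
  constructor
  · nlinarith [mul_nonneg (sub_nonneg.2 hp) ht0]
  · nlinarith [mul_le_mul_of_nonneg_left hconvex (by linarith : (0 : ℝ) ≤ 2 ^ (p - 1)),
      mul_nonneg (sub_nonneg.2 hK) (sub_nonneg.2 ht1)]

lemma one_le_of_fact_one_le_ofReal (p : ℝ) [Fact (1 ≤ ENNReal.ofReal p)] : 1 ≤ p :=
  ENNReal.one_le_ofReal.mp Fact.out

namespace PiLp

open Metric

variable {ι : Type*} [Fintype ι]

lemma dist_rpow_eq_sum_abs_rpow {p : ℝ} (hp : 0 < p) (x y : PiLp (.ofReal p) fun _ : ι => ℝ) :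
    dist x y ^ p = ∑ i, |x i - y i| ^ p := by
  have hp' : (ENNReal.ofReal p).toReal = p := ENNReal.toReal_ofReal hp.le
  rw [dist_eq_sum (by rwa [hp']), hp', ← rpow_mul (by positivity), one_div_mul_cancel hp.ne',
    rpow_one]
  simp only [Real.dist_eq]

lemma mem_closedBall_zero_one_iff {p : ℝ} [Fact (1 ≤ ENNReal.ofReal p)]
    (x : PiLp (.ofReal p) fun _ : ι => ℝ) : x ∈ closedBall 0 1 ↔ ∑ i, |x i| ^ p ≤ 1 := by
  have hp : 0 < p := by linarith [one_le_of_fact_one_le_ofReal p]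
  rw [mem_closedBall, ← rpow_le_rpow_iff dist_nonneg zero_le_one hp, one_rpow,
    dist_rpow_eq_sum_abs_rpow hp]
  simp only [zero_apply, sub_zero]

lemma mem_closedBall_zero_one_iff_of_L1 (x : PiLp 1 fun _ : ι => ℝ) :
    x ∈ closedBall 0 1 ↔ ∑ i, |x i| ≤ 1 := by
  simp only [mem_closedBall_zero_iff, norm_eq_of_L1, Real.norm_eq_abs]

end PiLp

section MazurMap

open Metric Set

variable {ι : Type*} {p : ℝ}

noncomputable def mazurMap (p : ℝ) (x : PiLp (.ofReal p) fun _ : ι => ℝ) :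
    PiLp 1 fun _ : ι => ℝ :=
  WithLp.toLp 1 fun i => signedPow p (x i)

@[simp]
lemma mazurMap_apply (x : PiLp (.ofReal p) fun _ : ι => ℝ) (i : ι) :
    mazurMap p x i = signedPow p (x i) := rfl

variable [Fintype ι] [Fact (1 ≤ ENNReal.ofReal p)]

lemma mapsTo_mazurMap :
    MapsTo (mazurMap p) (closedBall (0 : PiLp (.ofReal p) fun _ : ι => ℝ) 1) (closedBall 0 1) := by
  intro x hx
  rw [PiLp.mem_closedBall_zero_one_iff] at hx
  rw [PiLp.mem_closedBall_zero_one_iff_of_L1]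
  have hp : p ≠ 0 := by linarith [one_le_of_fact_one_le_ofReal p]
  simpa only [mazurMap_apply, abs_signedPow hp] using hx

lemma surjOn_mazurMap :
    SurjOn (mazurMap p) (closedBall (0 : PiLp (.ofReal p) fun _ : ι => ℝ) 1) (closedBall 0 1) := by
  intro y hy
  rw [PiLp.mem_closedBall_zero_one_iff_of_L1] at hy
  have hp : 0 < p := by linarith [one_le_of_fact_one_le_ofReal p]
  refine ⟨WithLp.toLp _ fun i => signedPow p⁻¹ (y i), ?_, ?_⟩
  · rw [PiLp.mem_closedBall_zero_one_iff]
    simpa only [PiLp.toLp_apply, abs_signedPow (inv_ne_zero hp.ne'), ← rpow_mul (abs_nonneg _),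
      inv_mul_cancel₀ hp.ne', rpow_one] using hy
  · ext i
    exact signedPow_signedPow (inv_mul_cancel₀ hp.ne') (y i)

lemma abs_dist_sub_dist_mazurMap_le {x y : PiLp (.ofReal p) fun _ : ι => ℝ}
    (hx : x ∈ closedBall 0 1) (hy : y ∈ closedBall 0 1) :
    |dist x y - dist (mazurMap p x) (mazurMap p y)| ≤ 2 * (2 ^ p - 2) := by
  have hp := one_le_of_fact_one_le_ofReal p
  have hdiam : dist x y ≤ 2 := by
    linarith [dist_triangle_right x y 0, mem_closedBall.1 hx, mem_closedBall.1 hy]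
  have hD : dist (mazurMap p x) (mazurMap p y) = ∑ i, |signedPow p (x i) - signedPow p (y i)| := by
    simp only [PiLp.dist_eq_of_L1, mazurMap_apply, Real.dist_eq]
  have hd := PiLp.dist_rpow_eq_sum_abs_rpow (by linarith) x y
  rw [PiLp.mem_closedBall_zero_one_iff] at hx hy
  refine abs_sub_le_of_rpow_le_mul_of_le_rpow_add hp dist_nonneg hdiam ?_ ?_
  · rw [hd, hD, Finset.mul_sum]
    exact Finset.sum_le_sum fun i _ => abs_sub_rpow_le_mul_abs_signedPow_sub hp (x i) (y i)
  · have hK : 0 ≤ (2 : ℝ) ^ (p - 1) - 1 := sub_nonneg.2 (one_le_rpow one_le_two (by linarith))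
    calc dist (mazurMap p x) (mazurMap p y)
        ≤ ∑ i, (|x i - y i| ^ p + (2 ^ (p - 1) - 1) * (|x i| ^ p + |y i| ^ p)) := by
          rw [hD]
          exact Finset.sum_le_sum fun i _ => abs_signedPow_sub_le hp (x i) (y i)
      _ = dist x y ^ p + (2 ^ (p - 1) - 1) * (∑ i, |x i| ^ p + ∑ i, |y i| ^ p) := by
          rw [hd, Finset.sum_add_distrib, ← Finset.mul_sum, Finset.sum_add_distrib]
      _ ≤ dist x y ^ p + 2 * (2 ^ (p - 1) - 1) := by nlinarith

end MazurMap

namespace GromovHausdorff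

variable {X Y : Type*} [MetricSpace X] [CompactSpace X] [Nonempty X] [MetricSpace Y]
  [CompactSpace Y] [Nonempty Y]

lemma ghDist_le_of_surjective {f : X → Y} (hf : Function.Surjective f) {ε : ℝ}
    (H : ∀ x y, |dist x y - dist (f x) (f y)| ≤ ε) : ghDist X Y ≤ ε / 2 := by
  simpa using ghDist_le_of_approx_subsets (s := Set.univ) (fun x => f x.1) (ε₁ := 0) (ε₃ := 0)
    (fun x => ⟨x, Set.mem_univ x, (dist_self x).le⟩)
    (fun y => ⟨⟨(hf y).choose, Set.mem_univ _⟩, by simp [(hf y).choose_spec]⟩)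
    (fun x y => H x y)

end GromovHausdorff

theorem stmt_7 (N : ℕ) (p : ℝ) (hp : 1 ≤ p) :
    letI : Fact (1 ≤ ENNReal.ofReal p) := ⟨ENNReal.one_le_ofReal.mpr hp⟩
    letI : CompactSpace
        ↥(Metric.closedBall (0 : PiLp (ENNReal.ofReal p) fun _ : Fin N => ℝ) 1) :=
      isCompact_iff_compactSpace.mp (isCompact_closedBall 0 1)
    letI : Nonempty
        ↥(Metric.closedBall (0 : PiLp (ENNReal.ofReal p) fun _ : Fin N => ℝ) 1) :=
      ⟨⟨0, Metric.mem_closedBall_self zero_le_one⟩⟩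
    letI : CompactSpace ↥(Metric.closedBall (0 : PiLp 1 fun _ : Fin N => ℝ) 1) :=
      isCompact_iff_compactSpace.mp (isCompact_closedBall 0 1)
    letI : Nonempty ↥(Metric.closedBall (0 : PiLp 1 fun _ : Fin N => ℝ) 1) :=
      ⟨⟨0, Metric.mem_closedBall_self zero_le_one⟩⟩
    GromovHausdorff.ghDist
        ↥(Metric.closedBall (0 : PiLp (ENNReal.ofReal p) fun _ : Fin N => ℝ) 1)
        ↥(Metric.closedBall (0 : PiLp 1 fun _ : Fin N => ℝ) 1) ≤ (2:ℝ) ^ p - 2 := by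
  have : Fact (1 ≤ ENNReal.ofReal p) := ⟨ENNReal.one_le_ofReal.mpr hp⟩
  calc _ ≤ 2 * (2 ^ p - 2) / 2 :=
        GromovHausdorff.ghDist_le_of_surjective
          (mapsTo_mazurMap.restrict_surjective_iff.2 surjOn_mazurMap)
          fun x y => abs_dist_sub_dist_mazurMap_le x.2 y.2
    _ = 2 ^ p - 2 := by ring
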